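/- arXiv:2405.15667 — 3 statements merged into one kernel-verified Lean document; each statement's English description precedes it below -/
import Mathlib

section
/- Let ρ, r ∈ (0,1) and let g : 𝔻 → 𝔻 be an analytic self-map of the unit disk with g(0) = 0 and |g'(0)| = ρ. Then for all z with |z| ≤ r, one has |g(z)| ≤ c·|z| where c = (ρ + r)/(1 + rρ). -/
/-!
Write `g z = z * h z` with `h = dslope g 0`; then `h` maps the disk into the closed disk and
`h 0 = g' 0` has modulus `ρ`. By the Schwarz–Pick lemma the pseudo-hyperbolic distance
`|h z - h 0| / |1 - conj (h 0) * h z|` is at most `|z| ≤ r`, and a point within pseudo-hyperbolic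
distance `r` of a point of modulus `ρ` has modulus at most `(ρ + r) / (1 + r ρ)`, because radial
projection does not increase pseudo-hyperbolic distance: this comes from the identity
`|1 - conj a * w|² - |a - w|² = (1 - |a|²)(1 - |w|²)` and `|1 - conj a * w| ≥ 1 - |a| |w|`.
-/

open Complex Metric
open scoped ComplexConjugate

/-- For `‖a‖ < 1`, the involutive automorphism of the unit disk exchanging `0` and `a`. -/
noncomputable def Complex.mobius (a w : ℂ) : ℂ := (a - w) / (1 - conj a * w)

namespace Complex

theorem norm_one_sub_conj_mul_sq_sub_norm_sub_sq (a w : ℂ) :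
    ‖1 - conj a * w‖ ^ 2 - ‖a - w‖ ^ 2 = (1 - ‖a‖ ^ 2) * (1 - ‖w‖ ^ 2) := by
  simp only [← normSq_eq_norm_sq, normSq_apply, sub_re, sub_im, mul_re, mul_im, conj_re, conj_im,
    one_re, one_im]
  ring

theorem norm_sub_le_norm_one_sub_conj_mul {a w : ℂ} (ha : ‖a‖ ≤ 1) (hw : ‖w‖ ≤ 1) :
    ‖a - w‖ ≤ ‖1 - conj a * w‖ := by
  have hid := norm_one_sub_conj_mul_sq_sub_norm_sub_sq a w
  have hnonneg : 0 ≤ (1 - ‖a‖ ^ 2) * (1 - ‖w‖ ^ 2) := by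
    apply mul_nonneg <;> nlinarith [norm_nonneg a, norm_nonneg w]
  exact (pow_le_pow_iff_left₀ (norm_nonneg _) (norm_nonneg _) two_ne_zero).1 (by linarith)

theorem one_sub_norm_mul_le_norm_one_sub_conj_mul (a w : ℂ) :
    1 - ‖a‖ * ‖w‖ ≤ ‖1 - conj a * w‖ := by
  simpa using norm_sub_norm_le (1 : ℂ) (conj a * w)

theorem one_sub_conj_mul_ne_zero {a w : ℂ} (ha : ‖a‖ < 1) (hw : ‖w‖ ≤ 1) :
    1 - conj a * w ≠ 0 := by
  rw [← norm_pos_iff]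
  have := one_sub_norm_mul_le_norm_one_sub_conj_mul a w
  nlinarith [norm_nonneg a, norm_nonneg w]

theorem mobius_self (a : ℂ) : mobius a a = 0 := by
  simp [mobius]

theorem norm_mobius_le_one {a w : ℂ} (ha : ‖a‖ < 1) (hw : ‖w‖ ≤ 1) : ‖mobius a w‖ ≤ 1 := by
  rw [mobius, norm_div, div_le_one (norm_pos_iff.2 (one_sub_conj_mul_ne_zero ha hw))]
  exact norm_sub_le_norm_one_sub_conj_mul ha.le hw

theorem norm_mul_one_add_le_of_norm_mobius_le {a w : ℂ} {t : ℝ} (ha : ‖a‖ < 1) (hw : ‖w‖ ≤ 1)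
    (ht : 0 ≤ t) (h : ‖mobius a w‖ ≤ t) : ‖w‖ * (1 + t * ‖a‖) ≤ ‖a‖ + t := by
  set ρ := ‖a‖
  set s := ‖w‖
  have hρ0 : 0 ≤ ρ := norm_nonneg a
  have hs0 : 0 ≤ s := norm_nonneg w
  rcases le_or_gt 1 t with ht1 | ht1
  · nlinarith [mul_nonneg (sub_nonneg.2 ht1) (sub_nonneg.2 ha.le),
      mul_le_mul_of_nonneg_right hw (by positivity : 0 ≤ 1 + t * ρ)]
  set D := ‖1 - conj a * w‖
  have hD : 0 < D := norm_pos_iff.2 (one_sub_conj_mul_ne_zero ha hw)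
  have hmob : ‖a - w‖ ^ 2 ≤ t ^ 2 * D ^ 2 := by
    rw [mobius, norm_div, div_le_iff₀ hD] at h
    rw [← mul_pow]
    exact pow_le_pow_left₀ (norm_nonneg _) h 2
  have hρs : 0 ≤ 1 - ρ * s := by nlinarith
  have hD_ge : (1 - ρ * s) ^ 2 ≤ D ^ 2 :=
    pow_le_pow_left₀ hρs (one_sub_norm_mul_le_norm_one_sub_conj_mul a w) 2
  have hsq : (s - ρ) ^ 2 ≤ (t * (1 - ρ * s)) ^ 2 :=
    calc (s - ρ) ^ 2 = (1 - ρ * s) ^ 2 - (1 - ρ ^ 2) * (1 - s ^ 2) := by ring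
      _ = (1 - ρ * s) ^ 2 - (D ^ 2 - ‖a - w‖ ^ 2) := by
        rw [norm_one_sub_conj_mul_sq_sub_norm_sub_sq]
      _ ≤ (1 - ρ * s) ^ 2 - (1 - t ^ 2) * D ^ 2 := by linarith
      _ ≤ (1 - ρ * s) ^ 2 - (1 - t ^ 2) * (1 - ρ * s) ^ 2 := by
        gcongr; nlinarith
      _ = (t * (1 - ρ * s)) ^ 2 := by ring
  have habs := abs_le_of_sq_le_sq hsq (mul_nonneg ht hρs)
  linarith [le_abs_self (s - ρ)]

/-- Schwarz–Pick at the origin. -/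
theorem norm_mobius_le_norm_of_mapsTo_ball {h : ℂ → ℂ} (hd : DifferentiableOn ℂ h (ball 0 1))
    (hmaps : Set.MapsTo h (ball 0 1) (closedBall 0 1)) (h0 : ‖h 0‖ < 1) {z : ℂ} (hz : ‖z‖ < 1) :
    ‖mobius (h 0) (h z)‖ ≤ ‖z‖ := by
  have hnorm : ∀ w ∈ ball (0 : ℂ) 1, ‖h w‖ ≤ 1 := fun w hw ↦ by simpa using hmaps hw
  refine norm_le_norm_of_mapsTo_ball (f := fun w ↦ mobius (h 0) (h w)) ?_ ?_ (mobius_self _) hz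
  · exact ((differentiableOn_const _).sub hd).div ((differentiableOn_const _).sub
      ((differentiableOn_const _).mul hd)) fun w hw ↦ one_sub_conj_mul_ne_zero h0 (hnorm w hw)
  · exact fun w hw ↦ by simpa using norm_mobius_le_one h0 (hnorm w hw)

end Complex

/-- Uniform Schwarz Lemma: if `g : 𝔻 → 𝔻` is analytic with `g 0 = 0` and
`‖deriv g 0‖ = ρ`, then `‖g z‖ ≤ ((ρ + r)/(1 + r*ρ)) * ‖z‖` for `‖z‖ ≤ r`. -/
theorem uniform_schwarz (ρ r : ℝ) (hρ : ρ ∈ Set.Ioo (0:ℝ) 1) (hr : r ∈ Set.Ioo (0:ℝ) 1)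
    (g : ℂ → ℂ) (hg : DifferentiableOn ℂ g (ball (0:ℂ) 1))
    (hmaps : Set.MapsTo g (ball (0:ℂ) 1) (ball (0:ℂ) 1))
    (hg0 : g 0 = 0) (hg' : ‖deriv g 0‖ = ρ) :
    ∀ z : ℂ, ‖z‖ ≤ r → ‖g z‖ ≤ ((ρ + r) / (1 + r * ρ)) * ‖z‖ := by
  intro z hz
  have hz1 : ‖z‖ < 1 := hz.trans_lt hr.2
  set h := dslope g 0
  have hd : DifferentiableOn ℂ h (ball 0 1) :=
    (differentiableOn_dslope (ball_mem_nhds 0 one_pos)).2 hg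
  have hh_maps : Set.MapsTo h (ball 0 1) (closedBall 0 1) := fun w hw ↦ by
    simpa using norm_dslope_le_div_of_mapsTo_ball hg
      (by rw [hg0]; exact hmaps.mono_right ball_subset_closedBall) hw
  have hh0 : ‖h 0‖ = ρ := by rw [← hg', ← dslope_same]
  have hh0_lt : ‖h 0‖ < 1 := hh0 ▸ hρ.2
  have hhz : ‖h z‖ * (1 + r * ρ) ≤ ρ + r := hh0 ▸
    norm_mul_one_add_le_of_norm_mobius_le hh0_lt (by simpa using hh_maps (mem_ball_zero_iff.2 hz1))
      hr.1.le ((norm_mobius_le_norm_of_mapsTo_ball hd hh_maps hh0_lt hz1).trans hz)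
  have hgz : g z = z * h z := by simpa [hg0] using (sub_smul_dslope g 0 z).symm
  rw [hgz, norm_mul, mul_comm]
  gcongr
  exact (le_div_iff₀ (by linarith [mul_pos hr.1 hρ.1])).2 hhz
end

section
/- Let 0 < ρ ≤ r < 1 and let g : 𝔻 → 𝔻 be analytic with g(0) = 0 and |g'(0)| = ρ. Then the preimage g⁻¹(closed disk of radius r) contains the closed disk of radius R = √(r/(2−r)), and r < R < 1. -/
/-!
`h = dslope g 0` (that is, `g z / z`) maps the disc into the closed disc with `‖h 0‖ = ρ`.
Composing `h` with the disc automorphism sending `h 0` to `0` and applying Schwarz's lemma gives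
the Schwarz–Pick bound `‖h z‖ ≤ (‖z‖ + ρ) / (1 + ‖z‖ ρ)`, which increases with `ρ ≤ r`.
So `‖g z‖ ≤ t (t + r) / (1 + t r)` for `‖z‖ = t`, and `t (t + r) ≤ r (1 + t r)` once
`t ≤ √(r / (2 - r))`, since then `t² ≤ r / (2 - r)` and `t ≤ 1 / (2 - r)`.
-/

open Complex ComplexConjugate Metric Set

theorem sq_norm_one_sub_conj_mul (a w : ℂ) :
    ‖1 - conj a * w‖ ^ 2 = ‖w - a‖ ^ 2 + (1 - ‖a‖ ^ 2) * (1 - ‖w‖ ^ 2) := by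
  simp only [Complex.sq_norm, normSq_apply, mul_re, mul_im, sub_re, sub_im, one_re, one_im,
    conj_re, conj_im]
  ring

theorem norm_sub_le_norm_one_sub_conj_mul {a w : ℂ} (ha : ‖a‖ ≤ 1) (hw : ‖w‖ ≤ 1) :
    ‖w - a‖ ≤ ‖1 - conj a * w‖ := by
  refine (pow_le_pow_iff_left₀ (norm_nonneg _) (norm_nonneg _) two_ne_zero).1 ?_
  rw [sq_norm_one_sub_conj_mul]
  have hc : 0 ≤ (1 - ‖a‖ ^ 2) * (1 - ‖w‖ ^ 2) := by
    apply mul_nonneg <;> nlinarith [norm_nonneg a, norm_nonneg w]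
  linarith

/-- Squared, both sides differ from `‖w + a‖²` and `(‖w‖ + ‖a‖)²` by the same factor
`(1 - ‖a‖²)(1 - ‖w‖²)`, which reduces this to the triangle inequality. -/
theorem norm_add_mul_one_add_mul_le {a w : ℂ} (ha : ‖a‖ ≤ 1) (hw : ‖w‖ ≤ 1) :
    ‖w + a‖ * (1 + ‖w‖ * ‖a‖) ≤ (‖w‖ + ‖a‖) * ‖1 + conj a * w‖ := by
  have hsq := sq_norm_one_sub_conj_mul (-a) w
  simp only [map_neg, neg_mul, sub_neg_eq_add, norm_neg] at hsq
  set c := (1 - ‖a‖ ^ 2) * (1 - ‖w‖ ^ 2)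
  have hc : 0 ≤ c := by apply mul_nonneg <;> nlinarith [norm_nonneg a, norm_nonneg w]
  have hP : (1 + ‖w‖ * ‖a‖) ^ 2 = (‖w‖ + ‖a‖) ^ 2 + c := by ring
  have htri : ‖w + a‖ ^ 2 ≤ (‖w‖ + ‖a‖) ^ 2 :=
    pow_le_pow_left₀ (norm_nonneg _) (norm_add_le w a) 2
  refine (pow_le_pow_iff_left₀ (by positivity) (by positivity) two_ne_zero).1 ?_
  rw [mul_pow, mul_pow, hsq, hP]
  nlinarith [mul_le_mul_of_nonneg_right htri hc]

theorem add_div_one_add_mul_le_of_le {ρ s t : ℝ} (hρ0 : 0 ≤ ρ) (hρ1 : ρ ≤ 1) (hs : 0 ≤ s)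
    (hst : s ≤ t) : (s + ρ) / (1 + s * ρ) ≤ (t + ρ) / (1 + t * ρ) := by
  rw [div_le_div_iff₀ (by positivity) (by nlinarith)]
  have hρ_sq : 0 ≤ 1 - ρ ^ 2 := by nlinarith
  nlinarith [mul_nonneg (sub_nonneg.2 hst) hρ_sq]

theorem norm_conj_mul_lt_one {a w : ℂ} (ha : ‖a‖ < 1) (hw : ‖w‖ ≤ 1) : ‖conj a * w‖ < 1 := by
  rw [norm_mul, RCLike.norm_conj]
  nlinarith [norm_nonneg a, norm_nonneg w]

theorem norm_apply_le_of_mapsTo_unitBall {f : ℂ → ℂ} (hd : DifferentiableOn ℂ f (ball 0 1))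
    (hmaps : MapsTo f (ball 0 1) (closedBall 0 1)) (h0 : ‖f 0‖ < 1) {z : ℂ} (hz : ‖z‖ < 1) :
    ‖f z‖ ≤ (‖z‖ + ‖f 0‖) / (1 + ‖z‖ * ‖f 0‖) := by
  set a := f 0
  have hf : ∀ w ∈ ball (0 : ℂ) 1, ‖f w‖ ≤ 1 := fun w hw => mem_closedBall_zero_iff.1 (hmaps hw)
  have hden : ∀ w ∈ ball (0 : ℂ) 1, 1 - conj a * f w ≠ 0 := fun w hw h =>
    (norm_conj_mul_lt_one h0 (hf w hw)).ne (by rw [← sub_eq_zero.1 h, norm_one])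
  -- the disc automorphism sending `a` to `0`, composed with `f`
  set k : ℂ → ℂ := fun w => (f w - a) / (1 - conj a * f w)
  have hk_d : DifferentiableOn ℂ k (ball 0 1) :=
    (hd.sub_const a).div ((differentiableOn_const 1).sub (hd.const_mul _)) hden
  have hk_maps : MapsTo k (ball 0 1) (closedBall 0 1) := fun w hw => by
    rw [mem_closedBall_zero_iff, norm_div, div_le_one (norm_pos_iff.2 (hden w hw))]
    exact norm_sub_le_norm_one_sub_conj_mul h0.le (hf w hw)
  have hkz : ‖k z‖ ≤ ‖z‖ :=
    Complex.norm_le_norm_of_mapsTo_ball hk_d hk_maps (by simp [k, a]) hz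
  have hz' : z ∈ ball (0 : ℂ) 1 := mem_ball_zero_iff.2 hz
  have hinv : f z * (1 + conj a * k z) = k z + a := by
    have hkz_mul := div_mul_cancel₀ (f z - a) (hden z hz')
    linear_combination -hkz_mul
  have hk1 : ‖k z‖ ≤ 1 := hkz.trans hz.le
  have hpos : 0 < ‖1 + conj a * k z‖ := by
    have hrev := norm_sub_norm_le (1 : ℂ) (-(conj a * k z))
    rw [sub_neg_eq_add, norm_neg, norm_one] at hrev
    linarith [norm_conj_mul_lt_one h0 hk1]
  calc ‖f z‖ = ‖k z + a‖ / ‖1 + conj a * k z‖ := by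
        rw [← hinv, norm_mul, mul_div_cancel_right₀ _ hpos.ne']
    _ ≤ (‖k z‖ + ‖a‖) / (1 + ‖k z‖ * ‖a‖) := by
        rw [div_le_div_iff₀ hpos (by positivity)]
        exact norm_add_mul_one_add_mul_le h0.le hk1
    _ ≤ (‖z‖ + ‖a‖) / (1 + ‖z‖ * ‖a‖) :=
        add_div_one_add_mul_le_of_le (norm_nonneg _) h0.le (norm_nonneg _) hkz

theorem lt_sqrt_div_two_sub {r : ℝ} (hr0 : 0 < r) (hr1 : r < 1) : r < √(r / (2 - r)) := by
  rw [Real.lt_sqrt hr0.le, lt_div_iff₀ (by linarith)]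
  nlinarith [mul_pos hr0 (mul_pos (sub_pos.2 hr1) (sub_pos.2 hr1))]

theorem sqrt_div_two_sub_lt_one {r : ℝ} (hr1 : r < 1) : √(r / (2 - r)) < 1 := by
  rw [Real.sqrt_lt' one_pos, one_pow, div_lt_one (by linarith)]
  linarith

theorem mul_add_le_of_le_sqrt_div_two_sub {r t : ℝ} (hr0 : 0 ≤ r) (hr1 : r < 1) (ht0 : 0 ≤ t)
    (ht : t ≤ √(r / (2 - r))) : t * (t + r) ≤ r * (1 + t * r) := by
  have h2r : 0 < 2 - r := by linarith
  have ht_sq : t ^ 2 ≤ r / (2 - r) := (Real.le_sqrt ht0 (by positivity)).1 ht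
  have ht_lin : t ≤ 1 / (2 - r) := by
    refine ht.trans ((Real.sqrt_le_left (by positivity)).2 ?_)
    rw [div_pow, one_pow, div_le_div_iff₀ h2r (by positivity)]
    nlinarith [sq_nonneg (1 - r)]
  have hsum : r / (2 - r) + r * (1 - r) * (1 / (2 - r)) = r := by field_simp; ring
  nlinarith [mul_le_mul_of_nonneg_left ht_lin (mul_nonneg hr0 (sub_nonneg.2 hr1.le))]

/-- If `0 < ρ ≤ r < 1` and `g : 𝔻 → 𝔻` is analytic with `g 0 = 0`, `‖deriv g 0‖ = ρ`,
then `g⁻¹(closedBall 0 r)` contains `closedBall 0 R` where `R = √(r/(2−r))`,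
and `r < R < 1`. -/
theorem uniform_schwarz_preimage (ρ r : ℝ) (hρ : 0 < ρ) (hρr : ρ ≤ r) (hr : r < 1)
    (g : ℂ → ℂ) (hg : DifferentiableOn ℂ g (ball (0:ℂ) 1))
    (hmaps : Set.MapsTo g (ball (0:ℂ) 1) (ball (0:ℂ) 1))
    (hg0 : g 0 = 0) (hg' : ‖deriv g 0‖ = ρ) :
    (∀ z : ℂ, ‖z‖ ≤ Real.sqrt (r / (2 - r)) → ‖g z‖ ≤ r) ∧
      r < Real.sqrt (r / (2 - r)) ∧ Real.sqrt (r / (2 - r)) < 1 := by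
  have hr0 : 0 < r := hρ.trans_le hρr
  refine ⟨fun z hz => ?_, lt_sqrt_div_two_sub hr0 hr, sqrt_div_two_sub_lt_one hr⟩
  have hz1 : ‖z‖ < 1 := hz.trans_lt (sqrt_div_two_sub_lt_one hr)
  set h := dslope g 0
  have hd : DifferentiableOn ℂ h (ball 0 1) :=
    (differentiableOn_dslope (ball_mem_nhds 0 one_pos)).2 hg
  have hh_maps : MapsTo h (ball 0 1) (closedBall 0 1) := fun w hw => by
    have hmaps' : MapsTo g (ball 0 1) (closedBall (g 0) 1) := by
      rw [hg0]; exact hmaps.mono_right ball_subset_closedBall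
    simpa using Complex.norm_dslope_le_div_of_mapsTo_ball hg hmaps' hw
  have hh0 : ‖h 0‖ = ρ := (congrArg norm (dslope_same g 0)).trans hg'
  have hgz : ‖g z‖ = ‖z‖ * ‖h z‖ := by
    simpa [hg0, norm_smul] using congrArg norm (sub_smul_dslope g 0 z).symm
  calc ‖g z‖ = ‖z‖ * ‖h z‖ := hgz
    _ ≤ ‖z‖ * ((‖z‖ + ρ) / (1 + ‖z‖ * ρ)) := by
        gcongr
        simpa [hh0] using norm_apply_le_of_mapsTo_unitBall hd hh_maps (hh0 ▸ hρr.trans_lt hr) hz1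
    _ ≤ ‖z‖ * ((‖z‖ + r) / (1 + ‖z‖ * r)) := by
        refine mul_le_mul_of_nonneg_left ?_ (norm_nonneg z)
        simpa only [add_comm, mul_comm] using
          add_div_one_add_mul_le_of_le (norm_nonneg z) hz1.le hρ.le hρr
    _ ≤ r := by
        rw [← mul_div_assoc, div_le_iff₀ (by positivity)]
        exact mul_add_le_of_le_sqrt_div_two_sub hr0.le hr (norm_nonneg z) hz
end

section
/- Let G(z) = −z²·exp(q(z) − c) where q(z) = 2·∑_{j=1}^{d−1} binom(d−1, j)·z^j/j and c = q(−1), for d ≥ 2. Then G(0) = 0, G(−1) = −1, G'(0) = 0, G'(−1) = 0, and the only critical points of G in ℂ are 0 and −1. -/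
/-!
By the binomial theorem `z q'(z) = 2((1 + z)^(d-1) - 1)`, so `2 + z q'(z) = 2(1 + z)^(d-1)` and
`G'(z) = -z (2 + z q'(z)) exp(q(z) - c) = -2z (1 + z)^(d-1) exp(q(z) - c)`.
Since `exp` never vanishes, the zeros of `G'` are exactly `0` and `-1`.
-/

open Complex Finset

theorem sum_Icc_one_choose_mul_pow {R : Type*} [CommRing R] (n : ℕ) (z : R) :
    ∑ j ∈ Icc 1 n, (n.choose j : R) * z ^ j = (1 + z) ^ n - 1 := by
  rw [add_comm, add_pow, Nat.range_succ_eq_Icc_zero, ← insert_Icc_add_one_left_eq_Icc n.zero_le,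
    sum_insert (by simp)]
  simp only [zero_add, pow_zero, one_pow, mul_one, Nat.choose_zero_right, Nat.cast_one,
    add_sub_cancel_left]
  exact sum_congr rfl fun j _ => mul_comm _ _

theorem mul_sum_Icc_one_choose_mul_pow_sub_one {R : Type*} [CommRing R] (n : ℕ) (z : R) :
    z * ∑ j ∈ Icc 1 n, (n.choose j : R) * z ^ (j - 1) = (1 + z) ^ n - 1 := by
  rw [mul_sum, ← sum_Icc_one_choose_mul_pow]
  refine sum_congr rfl fun j hj => ?_
  rw [mul_left_comm, ← pow_succ', Nat.sub_add_cancel (mem_Icc.mp hj).1]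

theorem hasDerivAt_sum_Icc_one_mul_pow_div {𝕜 : Type*} [NontriviallyNormedField 𝕜] [CharZero 𝕜]
    (a : ℕ → 𝕜) (n : ℕ) (z : 𝕜) :
    HasDerivAt (fun w => ∑ j ∈ Icc 1 n, a j * w ^ j / j) (∑ j ∈ Icc 1 n, a j * z ^ (j - 1)) z := by
  refine HasDerivAt.fun_sum fun j hj => ?_
  have hj : (j : 𝕜) ≠ 0 := Nat.cast_ne_zero.mpr (by grind)
  refine (((hasDerivAt_pow j z).const_mul (a j)).div_const (j : 𝕜)).congr_deriv ?_
  field_simp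

theorem hasDerivAt_neg_sq_mul_exp_sub {q : ℂ → ℂ} {q' z : ℂ} (hq : HasDerivAt q q' z) (c : ℂ) :
    HasDerivAt (fun w => -w ^ 2 * exp (q w - c)) (-z * (2 + z * q') * exp (q z - c)) z :=
  ((hasDerivAt_pow 2 z).fun_neg.fun_mul (hq.sub_const c).cexp).congr_deriv (by push_cast; ring)

theorem hasDerivAt_neg_sq_mul_exp_binomial_sum (n : ℕ) (c z : ℂ) :
    HasDerivAt (fun w => -w ^ 2 * exp (2 * ∑ j ∈ Icc 1 n, (n.choose j : ℂ) * w ^ j / j - c))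
      (-2 * z * (1 + z) ^ n * exp (2 * ∑ j ∈ Icc 1 n, (n.choose j : ℂ) * z ^ j / j - c)) z := by
  refine (hasDerivAt_neg_sq_mul_exp_sub
    ((hasDerivAt_sum_Icc_one_mul_pow_div _ n z).const_mul 2) c).congr_deriv ?_
  linear_combination (-2 * z * exp (2 * ∑ j ∈ Icc 1 n, (n.choose j : ℂ) * z ^ j / j - c)) *
    mul_sum_Icc_one_choose_mul_pow_sub_one n z

/-- For `G z = −z² exp(q z − c)` with `q z = 2 ∑_{j=1}^{d−1} C(d−1, j) z^j / j` and
`c = q(−1)`, `d ≥ 2`: `G` fixes `0` and `−1`, both are critical points, and `0` and `−1`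
are the only critical points of `G` in `ℂ`. -/
theorem superattracting_lift_model (d : ℕ) (hd : 2 ≤ d) (q G : ℂ → ℂ)
    (hq : ∀ z : ℂ, q z = 2 * ∑ j ∈ Finset.Icc 1 (d - 1), ((d - 1).choose j : ℂ) * z ^ j / j)
    (hG : ∀ z : ℂ, G z = -z ^ 2 * Complex.exp (q z - q (-1))) :
    G 0 = 0 ∧ G (-1) = -1 ∧ deriv G 0 = 0 ∧ deriv G (-1) = 0 ∧
      ∀ z : ℂ, deriv G z = 0 → z = 0 ∨ z = -1 := by
  have hG' : ∀ z, deriv G z = -2 * z * (1 + z) ^ (d - 1) * exp (q z - q (-1)) := by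
    obtain rfl : q = _ := funext hq
    obtain rfl : G = _ := funext hG
    exact fun z => (hasDerivAt_neg_sq_mul_exp_binomial_sum (d - 1) _ z).deriv
  refine ⟨by simp [hG], by simp [hG], by simp [hG'], by simp [hG']; omega, fun z hz => ?_⟩
  simpa [hG', exp_ne_zero, show d - 1 ≠ 0 by omega, add_eq_zero_iff_eq_neg'] using hz
end
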